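/- The orbit W·μ of μ = (1/2)(e_8'−e_7') + e_6' under the Weyl group W of E_7 equals the 56-element set O consisting of: the 24 vectors ±(1/2)(e_8'−e_7') ± e_i' for 1 ≤ i ≤ 6, and the 32 vectors (1/2)Σ_{i=1}^{6}(−1)^{δ(i)}e_i' with Σ_{i=1}^{6}δ(i) even. -/
import Mathlib
set_option maxRecDepth 10000


/-!
We work in `Fin 8 → ℝ` (coordinates with respect to the standard basis e₁,…,e₈,
resp. the dual basis e₁',…,e₈'); the pairing is the standard dot product.
Indices are 0-based: `k : Fin 8` corresponds to e_{k+1}. V is the subspace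
{v : v 6 = −v 7} (i.e. x₇' = −x₈').
-/

/-- The pairing ⟨α, v⟩ coming from ⟨e_i, e_j'⟩ = δ_{ij}. -/
def pairing (α v : Fin 8 → ℝ) : ℝ := ∑ k, α k * v k

/-- The root system of type E₇: the 126 vectors ±e_i±e_j (1 ≤ i < j ≤ 6), ±(e₇−e₈), and
±(1/2)(e₇−e₈+Σ_{i=1}^{6}(−1)^{δ(i)}e_i) with Σδ(i) odd. -/
def E7Roots : Set (Fin 8 → ℝ) :=
  {α | (∃ i j : Fin 6, i < j ∧ ∃ ε₁ ε₂ : ℝ, (ε₁ = 1 ∨ ε₁ = -1) ∧ (ε₂ = 1 ∨ ε₂ = -1) ∧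
          α = fun k : Fin 8 =>
            ε₁ * (if (k : ℕ) = (i : ℕ) then 1 else 0) +
            ε₂ * (if (k : ℕ) = (j : ℕ) then 1 else 0))
    ∨ (∃ ε : ℝ, (ε = 1 ∨ ε = -1) ∧
          α = fun k : Fin 8 =>
            ε * (if (k : ℕ) = 6 then 1 else if (k : ℕ) = 7 then -1 else 0))
    ∨ (∃ ε : ℝ, (ε = 1 ∨ ε = -1) ∧ ∃ δ : Fin 6 → Bool,
          Odd (Finset.filter (fun i => δ i = true) Finset.univ).card ∧
          α = fun k : Fin 8 =>
            ε * (if hk : (k : ℕ) < 6 then (if δ ⟨k, hk⟩ then -(1/2) else 1/2)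
                 else if (k : ℕ) = 6 then 1/2 else -(1/2)))}

/-- The simple roots α₁, …, α₇ of E₇ (0-based indexing: `simpleE7 i` is α_{i+1}). -/
noncomputable def simpleE7 : Fin 7 → (Fin 8 → ℝ) :=
  ![![1/2, -(1/2), -(1/2), -(1/2), -(1/2), -(1/2), -(1/2), 1/2],
    ![1, 1, 0, 0, 0, 0, 0, 0],
    ![-1, 1, 0, 0, 0, 0, 0, 0],
    ![0, -1, 1, 0, 0, 0, 0, 0],
    ![0, 0, -1, 1, 0, 0, 0, 0],
    ![0, 0, 0, -1, 1, 0, 0, 0],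
    ![0, 0, 0, 0, -1, 1, 0, 0]]

/-- μ = (1/2)(e₈'−e₇') + e₆'. -/
noncomputable def muE7 : Fin 8 → ℝ := ![0, 0, 0, 0, 0, 1, -(1/2), 1/2]

/-- The simple reflection s_i : V → V, s_i(v) = v − ⟨α_i, v⟩α_i^∨, where the coroot α_i^∨
has the same coefficients as α_i (written in the dual basis e₁',…,e₈'). -/
noncomputable def sE7 (i : Fin 7) : (Fin 8 → ℝ) → (Fin 8 → ℝ) :=
  fun v => v - pairing (simpleE7 i) v • simpleE7 i

/-- The orbit W·μ of μ under the Weyl group W generated by s₁,…,s₇: since each s_i is an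
involution, W·μ is exactly the set of vectors obtained from μ by applying a finite word
in the simple reflections. -/
def E7OrbitMu : Set (Fin 8 → ℝ) :=
  {v | ∃ l : List (Fin 7), v = l.foldr (fun i u => sE7 i u) muE7}

/-- The 56-element set O: the 24 vectors ±(1/2)(e₈'−e₇') ± e_i' (1 ≤ i ≤ 6), and the 32
vectors (1/2)Σ_{i=1}^{6}(−1)^{δ(i)}e_i' with Σδ(i) even. -/
def OE7 : Set (Fin 8 → ℝ) :=
  {v | ∃ i : Fin 6, ∃ ε₁ ε₂ : ℝ, (ε₁ = 1 ∨ ε₁ = -1) ∧ (ε₂ = 1 ∨ ε₂ = -1) ∧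
      v = fun k : Fin 8 =>
        if (k : ℕ) = (i : ℕ) then ε₂
        else if (k : ℕ) = 7 then ε₁ * (1/2)
        else if (k : ℕ) = 6 then ε₁ * (-(1/2)) else 0}
  ∪ {v | ∃ δ : Fin 6 → Bool, Even (Finset.filter (fun i => δ i = true) Finset.univ).card ∧
      v = fun k : Fin 8 =>
        if hk : (k : ℕ) < 6 then (1/2) * (if δ ⟨k, hk⟩ then -1 else 1) else 0}


/-! ### Auxiliary integer mirror (all vectors scaled by 2) -/

def dotZ (α v : Fin 8 → ℤ) : ℤ := ∑ k, α k * v k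

/-- The simple roots scaled by 2, with integer entries. -/
def aZ : Fin 7 → (Fin 8 → ℤ) :=
  ![![1, -1, -1, -1, -1, -1, -1, 1],
    ![2, 2, 0, 0, 0, 0, 0, 0],
    ![-2, 2, 0, 0, 0, 0, 0, 0],
    ![0, -2, 2, 0, 0, 0, 0, 0],
    ![0, 0, -2, 2, 0, 0, 0, 0],
    ![0, 0, 0, -2, 2, 0, 0, 0],
    ![0, 0, 0, 0, -2, 2, 0, 0]]

/-- The reflection on scaled vectors. -/
def sZ (i : Fin 7) : (Fin 8 → ℤ) → (Fin 8 → ℤ) :=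
  fun v k => v k - (dotZ (aZ i) v / 4) * aZ i k

def muZ : Fin 8 → ℤ := ![0, 0, 0, 0, 0, 2, -1, 1]

noncomputable def phiZ (v : Fin 8 → ℤ) : Fin 8 → ℝ := fun k => (v k : ℝ) / 2

def eZ (b : Bool) : ℤ := if b then 1 else -1

def rhoZ (i : Fin 6) (b₁ b₂ : Bool) : Fin 8 → ℤ := fun k =>
  if (k : ℕ) = (i : ℕ) then 2 * eZ b₂
  else if (k : ℕ) = 7 then eZ b₁
  else if (k : ℕ) = 6 then -eZ b₁ else 0

def psiZ (δ : Fin 6 → Bool) : Fin 8 → ℤ := fun k =>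
  if hk : (k : ℕ) < 6 then (if δ ⟨k, hk⟩ then -1 else 1) else 0

def memOZ (v : Fin 8 → ℤ) : Prop :=
  (∃ i b₁ b₂, v = rhoZ i b₁ b₂) ∨
  (∃ δ : Fin 6 → Bool, Even (Finset.filter (fun i => δ i = true) Finset.univ).card ∧ v = psiZ δ)

instance : DecidablePred memOZ := fun v => by unfold memOZ; infer_instance

lemma simpleE7_eq_aZ (i : Fin 7) : simpleE7 i = fun k => (aZ i k : ℝ) / 2 := by
  fin_cases i <;> funext k <;> fin_cases k <;> norm_num [simpleE7, aZ]

lemma muE7_eq_phiZ : muE7 = phiZ muZ := by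
  funext k; fin_cases k <;> norm_num [muE7, muZ, phiZ]

lemma closure_rho : ∀ (i : Fin 7) (j : Fin 6) (b₁ b₂ : Bool), memOZ (sZ i (rhoZ j b₁ b₂)) := by
  decide

lemma closure_psi : ∀ (i : Fin 7) (δ : Fin 6 → Bool),
    Even (Finset.filter (fun i => δ i = true) Finset.univ).card → memOZ (sZ i (psiZ δ)) := by
  decide

lemma div4_rho : ∀ (i : Fin 7) (j : Fin 6) (b₁ b₂ : Bool), 4 ∣ dotZ (aZ i) (rhoZ j b₁ b₂) := by
  decide

lemma div4_psi : ∀ (i : Fin 7) (δ : Fin 6 → Bool),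
    Even (Finset.filter (fun i => δ i = true) Finset.univ).card → 4 ∣ dotZ (aZ i) (psiZ δ) := by
  decide

lemma closure_OZ (i : Fin 7) (v : Fin 8 → ℤ) (hv : memOZ v) : memOZ (sZ i v) := by
  rcases hv with ⟨j, b₁, b₂, rfl⟩ | ⟨δ, hδ, rfl⟩
  · exact closure_rho i j b₁ b₂
  · exact closure_psi i δ hδ

lemma div4_OZ (i : Fin 7) (v : Fin 8 → ℤ) (hv : memOZ v) : 4 ∣ dotZ (aZ i) v := by
  rcases hv with ⟨j, b₁, b₂, rfl⟩ | ⟨δ, hδ, rfl⟩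
  · exact div4_rho i j b₁ b₂
  · exact div4_psi i δ hδ

lemma muZ_mem : memOZ muZ := by decide

lemma sE7_phiZ (i : Fin 7) (w : Fin 8 → ℤ) (hw : 4 ∣ dotZ (aZ i) w) :
    sE7 i (phiZ w) = phiZ (sZ i w) := by
  obtain ⟨c, hc⟩ := hw
  have hq : dotZ (aZ i) w / 4 = c := by rw [hc]; exact Int.mul_ediv_cancel_left c (by norm_num)
  have hp : pairing (simpleE7 i) (phiZ w) = (c : ℝ) := by
    have h1 : pairing (simpleE7 i) (phiZ w)
        = (∑ k, (aZ i k : ℝ) * (w k : ℝ)) / 4 := by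
      rw [pairing, simpleE7_eq_aZ, Finset.sum_div]
      exact Finset.sum_congr rfl fun k _ => by simp only [phiZ]; ring
    have h2 : (∑ k, (aZ i k : ℝ) * (w k : ℝ)) = ((dotZ (aZ i) w : ℤ) : ℝ) := by
      rw [dotZ]; push_cast; ring
    rw [h1, h2, hc]; push_cast; ring
    
  funext k
  simp only [sE7, Pi.sub_apply, Pi.smul_apply, smul_eq_mul, hp]
  simp only [simpleE7_eq_aZ, phiZ, sZ, hq]
  push_cast
  ring

lemma foldr_good (l : List (Fin 7)) :
    memOZ (l.foldr (fun i u => sZ i u) muZ) ∧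
    l.foldr (fun i u => sE7 i u) muE7 = phiZ (l.foldr (fun i u => sZ i u) muZ) := by
  induction l with
  | nil => exact ⟨muZ_mem, muE7_eq_phiZ⟩
  | cons i l ih =>
    refine ⟨closure_OZ i _ ih.1, ?_⟩
    simp only [List.foldr]
    rw [ih.2, sE7_phiZ i _ (div4_OZ i _ ih.1)]

def wordRho : Fin 6 → Bool → Bool → List (Fin 7)
  | 0, false, false => [1, 3, 4, 5, 6, 0, 2, 3, 4, 5, 1, 3, 4, 2, 3, 0, 2, 1, 3, 4, 5, 6]
  | 0, false, true => [2, 3, 4, 5, 6, 0, 2, 3, 4, 5, 1, 3, 4, 2, 3, 0, 2, 1, 3, 4, 5, 6]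
  | 0, true, false => [1, 3, 4, 5, 6]
  | 0, true, true => [2, 3, 4, 5, 6]
  | 1, false, false => [2, 1, 3, 4, 5, 6, 0, 2, 3, 4, 5, 1, 3, 4, 2, 3, 0, 2, 1, 3, 4, 5, 6]
  | 1, false, true => [3, 4, 5, 6, 0, 2, 3, 4, 5, 1, 3, 4, 2, 3, 0, 2, 1, 3, 4, 5, 6]
  | 1, true, false => [2, 1, 3, 4, 5, 6]
  | 1, true, true => [3, 4, 5, 6]
  | 2, false, false => [3, 2, 1, 3, 4, 5, 6, 0, 2, 3, 4, 5, 1, 3, 4, 2, 3, 0, 2, 1, 3, 4, 5, 6]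
  | 2, false, true => [4, 5, 6, 0, 2, 3, 4, 5, 1, 3, 4, 2, 3, 0, 2, 1, 3, 4, 5, 6]
  | 2, true, false => [3, 2, 1, 3, 4, 5, 6]
  | 2, true, true => [4, 5, 6]
  | 3, false, false => [4, 3, 2, 1, 3, 4, 5, 6, 0, 2, 3, 4, 5, 1, 3, 4, 2, 3, 0, 2, 1, 3, 4, 5, 6]
  | 3, false, true => [5, 6, 0, 2, 3, 4, 5, 1, 3, 4, 2, 3, 0, 2, 1, 3, 4, 5, 6]
  | 3, true, false => [4, 3, 2, 1, 3, 4, 5, 6]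
  | 3, true, true => [5, 6]
  | 4, false, false => [5, 4, 3, 2, 1, 3, 4, 5, 6, 0, 2, 3, 4, 5, 1, 3, 4, 2, 3, 0, 2, 1, 3, 4, 5, 6]
  | 4, false, true => [6, 0, 2, 3, 4, 5, 1, 3, 4, 2, 3, 0, 2, 1, 3, 4, 5, 6]
  | 4, true, false => [5, 4, 3, 2, 1, 3, 4, 5, 6]
  | 4, true, true => [6]
  | 5, false, false => [6, 5, 4, 3, 2, 1, 3, 4, 5, 6, 0, 2, 3, 4, 5, 1, 3, 4, 2, 3, 0, 2, 1, 3, 4, 5, 6]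
  | 5, false, true => [0, 2, 3, 4, 5, 1, 3, 4, 2, 3, 0, 2, 1, 3, 4, 5, 6]
  | 5, true, false => [6, 5, 4, 3, 2, 1, 3, 4, 5, 6]
  | 5, true, true => []

def deltaIdx (δ : Fin 6 → Bool) : ℕ := (Finset.univ.sum fun i : Fin 6 => if δ i then 2^(i:ℕ) else 0)
def wordPsiTable : List (List (Fin 7)) := [
  [0, 2, 3, 4, 5, 6],
  [],
  [],
  [0, 2, 1, 3, 4, 5, 6],
  [],
  [3, 0, 2, 1, 3, 4, 5, 6],
  [2, 3, 0, 2, 1, 3, 4, 5, 6],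
  [],
  [],
  [4, 3, 0, 2, 1, 3, 4, 5, 6],
  [4, 2, 3, 0, 2, 1, 3, 4, 5, 6],
  [],
  [3, 4, 2, 3, 0, 2, 1, 3, 4, 5, 6],
  [],
  [],
  [1, 3, 4, 2, 3, 0, 2, 1, 3, 4, 5, 6],
  [],
  [5, 4, 3, 0, 2, 1, 3, 4, 5, 6],
  [5, 4, 2, 3, 0, 2, 1, 3, 4, 5, 6],
  [],
  [5, 3, 4, 2, 3, 0, 2, 1, 3, 4, 5, 6],
  [],
  [],
  [5, 1, 3, 4, 2, 3, 0, 2, 1, 3, 4, 5, 6],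
  [4, 5, 3, 4, 2, 3, 0, 2, 1, 3, 4, 5, 6],
  [],
  [],
  [4, 5, 1, 3, 4, 2, 3, 0, 2, 1, 3, 4, 5, 6],
  [],
  [3, 4, 5, 1, 3, 4, 2, 3, 0, 2, 1, 3, 4, 5, 6],
  [2, 3, 4, 5, 1, 3, 4, 2, 3, 0, 2, 1, 3, 4, 5, 6],
  [],
  [],
  [6, 5, 4, 3, 0, 2, 1, 3, 4, 5, 6],
  [6, 5, 4, 2, 3, 0, 2, 1, 3, 4, 5, 6],
  [],
  [6, 5, 3, 4, 2, 3, 0, 2, 1, 3, 4, 5, 6],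
  [],
  [],
  [6, 5, 1, 3, 4, 2, 3, 0, 2, 1, 3, 4, 5, 6],
  [6, 4, 5, 3, 4, 2, 3, 0, 2, 1, 3, 4, 5, 6],
  [],
  [],
  [6, 4, 5, 1, 3, 4, 2, 3, 0, 2, 1, 3, 4, 5, 6],
  [],
  [6, 3, 4, 5, 1, 3, 4, 2, 3, 0, 2, 1, 3, 4, 5, 6],
  [6, 2, 3, 4, 5, 1, 3, 4, 2, 3, 0, 2, 1, 3, 4, 5, 6],
  [],
  [5, 6, 4, 5, 3, 4, 2, 3, 0, 2, 1, 3, 4, 5, 6],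
  [],
  [],
  [5, 6, 4, 5, 1, 3, 4, 2, 3, 0, 2, 1, 3, 4, 5, 6],
  [],
  [5, 6, 3, 4, 5, 1, 3, 4, 2, 3, 0, 2, 1, 3, 4, 5, 6],
  [5, 6, 2, 3, 4, 5, 1, 3, 4, 2, 3, 0, 2, 1, 3, 4, 5, 6],
  [],
  [],
  [4, 5, 6, 3, 4, 5, 1, 3, 4, 2, 3, 0, 2, 1, 3, 4, 5, 6],
  [4, 5, 6, 2, 3, 4, 5, 1, 3, 4, 2, 3, 0, 2, 1, 3, 4, 5, 6],
  [],
  [3, 4, 5, 6, 2, 3, 4, 5, 1, 3, 4, 2, 3, 0, 2, 1, 3, 4, 5, 6],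
  [],
  [],
  [1, 3, 4, 5, 6, 2, 3, 4, 5, 1, 3, 4, 2, 3, 0, 2, 1, 3, 4, 5, 6]
]
def wordPsi (δ : Fin 6 → Bool) : List (Fin 7) := wordPsiTable.getD (deltaIdx δ) []
lemma reach_rho : ∀ (i : Fin 6) (b₁ b₂ : Bool),
    rhoZ i b₁ b₂ = (wordRho i b₁ b₂).foldr (fun i u => sZ i u) muZ := by
  decide

lemma reach_psi : ∀ δ : Fin 6 → Bool,
    Even (Finset.filter (fun i => δ i = true) Finset.univ).card →
    psiZ δ = (wordPsi δ).foldr (fun i u => sZ i u) muZ := by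
  decide

lemma phi_rho (i : Fin 6) (b₁ b₂ : Bool) :
    phiZ (rhoZ i b₁ b₂) = fun k : Fin 8 =>
      if (k : ℕ) = (i : ℕ) then ((eZ b₂ : ℤ) : ℝ)
      else if (k : ℕ) = 7 then ((eZ b₁ : ℤ) : ℝ) * (1/2)
      else if (k : ℕ) = 6 then ((eZ b₁ : ℤ) : ℝ) * (-(1/2)) else 0 := by
  funext k
  simp only [phiZ, rhoZ]
  split_ifs <;> push_cast <;> ring

lemma phi_psi (δ : Fin 6 → Bool) :
    phiZ (psiZ δ) = fun k : Fin 8 =>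
      if hk : (k : ℕ) < 6 then (1/2 : ℝ) * (if δ ⟨k, hk⟩ then -1 else 1) else 0 := by
  funext k
  simp only [phiZ, psiZ]
  split_ifs <;> norm_num

lemma eZ_cast (b : Bool) : ((eZ b : ℤ) : ℝ) = 1 ∨ ((eZ b : ℤ) : ℝ) = -1 := by
  cases b <;> norm_num [eZ]

lemma OE7_eq : OE7 = phiZ '' {v | memOZ v} := by
  ext v
  constructor
  · rintro (⟨i, ε₁, ε₂, h₁, h₂, rfl⟩ | ⟨δ, hδ, rfl⟩)
    · refine ⟨rhoZ i (decide (ε₁ = 1)) (decide (ε₂ = 1)), Or.inl ⟨i, _, _, rfl⟩, ?_⟩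
      rw [phi_rho]
      rcases h₁ with rfl | rfl <;> rcases h₂ with rfl | rfl <;>
        norm_num [eZ]
    · exact ⟨psiZ δ, Or.inr ⟨δ, hδ, rfl⟩, phi_psi δ⟩
  · rintro ⟨w, ⟨i, b₁, b₂, rfl⟩ | ⟨δ, hδ, rfl⟩, rfl⟩
    · exact Or.inl ⟨i, _, _, eZ_cast b₁, eZ_cast b₂, (phi_rho i b₁ b₂)⟩
    · exact Or.inr ⟨δ, hδ, phi_psi δ⟩


/-- the orbit W·μ equals O. -/
theorem E7_orbit_of_mu : E7OrbitMu = OE7 := by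
  rw [OE7_eq]
  ext v
  constructor
  · rintro ⟨l, rfl⟩
    rw [(foldr_good l).2]
    exact ⟨_, (foldr_good l).1, rfl⟩
  · rintro ⟨w, ⟨i, b₁, b₂, rfl⟩ | ⟨δ, hδ, rfl⟩, rfl⟩
    · exact ⟨wordRho i b₁ b₂, by rw [(foldr_good _).2, ← reach_rho]⟩
    · exact ⟨wordPsi δ, by rw [(foldr_good _).2, ← reach_psi δ hδ]⟩
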